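/- Let w₁, w₂ be nonzero reals with |w₁| < |w₂|, and let μ be a Borel probability measure on ℝ with ∫ x² dμ(x) < ∞. Let μ_abs denote the pushforward of μ under the absolute value map x ↦ |x|. Then R_s(μ_abs) ≥ R_s(μ). (Lemma 2, first inequality: folding the input distribution does not decrease the Wyner secrecy rate when the legitimate gain is smaller.) -/

import Mathlib

/-!
Let `a(w) = E Q(w|X|)` and `b(w) = E Q(wX)`. Since `h(Q(-t)) = h(Q(t))`, the noise terms of the
two mutual informations agree, so `I(μ_abs, w) - I(μ, w) = h(a(w)) - h(b(w))`, an even function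
of `w`. For `w > 0` we have `a ≤ b ≤ 1 - a`, hence `|h'(b)| ≤ h'(a)`, while `a' = -E[φ(wX)|X|]`
and `|b'| ≤ E[φ(wX)|X|]`; so this gain is nonincreasing in `|w|`, which is the claim.
-/

open MeasureTheory Real Filter

/-- The standard Gaussian tail function `Q(x) = ∫_x^∞ (2π)^{-1/2} e^{-u²/2} du`. -/
noncomputable def gaussQ (x : ℝ) : ℝ :=
  ∫ u in Set.Ioi x, (Real.sqrt (2 * Real.pi))⁻¹ * Real.exp (-u ^ 2 / 2)

/-- `η(t) = -t log t` (with `η(0) = 0`, automatic since `Real.log 0 = 0`). -/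
noncomputable def eta (t : ℝ) : ℝ := -t * Real.log t

/-- The binary entropy function `h(p) = -p log p - (1-p) log (1-p)`. -/
noncomputable def binEnt (p : ℝ) : ℝ := eta p + eta (1 - p)

/-- `I(μ, w) = h(∫ Q(w·x) dμ) - ∫ h(Q(w·x)) dμ`, the mutual information of the real
Gaussian channel `Y = sgn(w·X + N)`, `N ~ N(0,1)`, with a one-bit ADC and input `X ~ μ`. -/
noncomputable def miMeas (μ : Measure ℝ) (w : ℝ) : ℝ :=
  binEnt (∫ x, gaussQ (w * x) ∂μ) - ∫ x, binEnt (gaussQ (w * x)) ∂μ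

/-- The Wyner secrecy rate `R_s(μ) = I(μ, w₁) - I(μ, w₂)`. -/
noncomputable def wynerRs (w₁ w₂ : ℝ) (μ : Measure ℝ) : ℝ := miMeas μ w₁ - miMeas μ w₂

open ProbabilityTheory Set

local notation "φ" => gaussianPDFReal 0 1

lemma gaussianPDFReal_zero_one_apply (u : ℝ) : φ u = (√(2 * π))⁻¹ * exp (-u ^ 2 / 2) := by
  simp [gaussianPDFReal]

@[fun_prop]
lemma continuous_gaussianPDFReal_zero_one : Continuous φ := by
  simp only [gaussianPDFReal_def]; fun_prop

lemma gaussianPDFReal_zero_one_neg (u : ℝ) : φ (-u) = φ u := by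
  simp [gaussianPDFReal_zero_one_apply]

lemma abs_mul_gaussianPDFReal_zero_one_le (u : ℝ) : |u| * φ u ≤ 1 := by
  have hpi : 1 ≤ √(2 * π) := one_le_sqrt.2 (by linarith [pi_gt_three])
  have hexp : |u| ≤ exp (u ^ 2 / 2) := by
    nlinarith [add_one_le_exp (u ^ 2 / 2), sq_abs u, sq_nonneg (|u| - 1)]
  calc |u| * φ u ≤ |u| * exp (-u ^ 2 / 2) := by
        rw [gaussianPDFReal_zero_one_apply]
        gcongr
        exact mul_le_of_le_one_left (exp_pos _).le (inv_le_one_of_one_le₀ hpi)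
    _ ≤ 1 := by
        rw [neg_div, exp_neg, ← div_eq_mul_inv]
        exact div_le_one_of_le₀ hexp (exp_pos _).le

lemma gaussQ_eq_integral (x : ℝ) : gaussQ x = ∫ u in Ioi x, φ u := by
  simp only [gaussQ, gaussianPDFReal_zero_one_apply]

lemma gaussQ_neg (x : ℝ) : gaussQ (-x) = 1 - gaussQ x := by
  have hsymm : gaussQ (-x) = ∫ u in Iic x, φ u := by
    calc gaussQ (-x) = ∫ u in Ioi (-x), φ (-u) := by
          simp only [gaussQ_eq_integral, gaussianPDFReal_zero_one_neg]
      _ = ∫ u in Iic x, φ u := by rw [integral_comp_neg_Ioi, neg_neg]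
  rw [hsymm, gaussQ_eq_integral, eq_sub_iff_add_eq, ← compl_Iic,
    integral_add_compl measurableSet_Iic (integrable_gaussianPDFReal 0 1),
    integral_gaussianPDFReal_eq_one 0 one_ne_zero]

lemma gaussQ_pos (x : ℝ) : 0 < gaussQ x := by
  rw [gaussQ_eq_integral, setIntegral_pos_iff_support_of_nonneg_ae
    (Eventually.of_forall (gaussianPDFReal_nonneg 0 1))
    (integrable_gaussianPDFReal 0 1).integrableOn,
    show Function.support φ = univ from
      eq_univ_of_forall fun u => (gaussianPDFReal_pos 0 1 u one_ne_zero).ne']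
  simp

lemma gaussQ_lt_one (x : ℝ) : gaussQ x < 1 := by
  linarith [gaussQ_neg x, gaussQ_pos (-x)]

lemma gaussQ_antitone : Antitone gaussQ := fun x y hxy => by
  simp only [gaussQ_eq_integral]
  exact setIntegral_mono_set (integrable_gaussianPDFReal 0 1).integrableOn
    (Eventually.of_forall (gaussianPDFReal_nonneg 0 1)) (Ioi_subset_Ioi hxy).eventuallyLE

lemma hasDerivAt_gaussQ (x : ℝ) : HasDerivAt gaussQ (-φ x) x := by
  have hQ : gaussQ = fun y => gaussQ 0 - ∫ u in (0 : ℝ)..y, φ u := by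
    ext y
    rw [gaussQ_eq_integral, gaussQ_eq_integral, ← intervalIntegral.integral_Ioi_sub_Ioi'
      (integrable_gaussianPDFReal 0 1).integrableOn
      (integrable_gaussianPDFReal 0 1).integrableOn]
    ring
  rw [hQ]
  exact (intervalIntegral.integral_hasDerivAt_right
    (integrable_gaussianPDFReal 0 1).intervalIntegrable
    (continuous_gaussianPDFReal_zero_one.stronglyMeasurableAtFilter _ _)
    continuous_gaussianPDFReal_zero_one.continuousAt).const_sub _

@[fun_prop]
lemma continuous_gaussQ : Continuous gaussQ :=
  continuous_iff_continuousAt.2 fun x => (hasDerivAt_gaussQ x).continuousAt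

lemma binEnt_eq_binEntropy : binEnt = binEntropy := by
  ext p
  simp only [binEnt, eta, binEntropy, log_inv]
  ring

lemma binEnt_gaussQ_neg (x : ℝ) : binEnt (gaussQ (-x)) = binEnt (gaussQ x) := by
  rw [gaussQ_neg, binEnt_eq_binEntropy, binEntropy_one_sub]

noncomputable def gaussQMean (ν : Measure ℝ) (w : ℝ) : ℝ := ∫ x, gaussQ (w * x) ∂ν

section GaussQMean

variable (ν : Measure ℝ)

lemma integrable_gaussQ_mul [IsFiniteMeasure ν] (w : ℝ) :
    Integrable (fun x => gaussQ (w * x)) ν :=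
  Integrable.of_bound (by fun_prop) 1 (Eventually.of_forall fun x => by
    rw [norm_of_nonneg (gaussQ_pos _).le]
    exact (gaussQ_lt_one _).le)

lemma gaussQMean_neg [IsProbabilityMeasure ν] (w : ℝ) :
    gaussQMean ν (-w) = 1 - gaussQMean ν w := by
  simp only [gaussQMean, neg_mul, gaussQ_neg]
  rw [integral_sub (integrable_const 1) (integrable_gaussQ_mul ν w)]
  simp

lemma gaussQMean_pos [IsProbabilityMeasure ν] (w : ℝ) : 0 < gaussQMean ν w := by
  rw [gaussQMean, integral_pos_iff_support_of_nonneg (fun x => (gaussQ_pos _).le)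
    (integrable_gaussQ_mul ν w),
    show Function.support (fun x => gaussQ (w * x)) = univ from
      eq_univ_of_forall fun x => (gaussQ_pos _).ne']
  simp

lemma gaussQMean_lt_one [IsProbabilityMeasure ν] (w : ℝ) : gaussQMean ν w < 1 := by
  have h := gaussQMean_neg ν (-w)
  rw [neg_neg] at h
  linarith [gaussQMean_pos ν (-w)]

@[fun_prop]
lemma continuous_gaussQMean [IsFiniteMeasure ν] : Continuous (gaussQMean ν) :=
  continuous_of_dominated (fun w => (integrable_gaussQ_mul ν w).aestronglyMeasurable)
    (fun w => Eventually.of_forall fun x => by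
      rw [norm_of_nonneg (gaussQ_pos _).le]
      exact (gaussQ_lt_one _).le)
    (integrable_const 1) (Eventually.of_forall fun x => by fun_prop)

-- Near `w ≠ 0` the derivative is dominated by a constant, since `|x| φ(v x) ≤ 1 / |v|`.
lemma hasDerivAt_gaussQMean [IsFiniteMeasure ν] {w : ℝ} (hw : w ≠ 0) :
    HasDerivAt (gaussQMean ν) (-∫ x, φ (w * x) * x ∂ν) w := by
  have hball : ∀ v ∈ Metric.ball w (|w| / 2), |w| / 2 ≤ |v| := fun v hv => by
    rw [Metric.mem_ball, dist_eq_norm, norm_eq_abs] at hv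
    linarith [abs_sub_abs_le_abs_sub w v, abs_sub_comm v w]
  have hbound : ∀ v ∈ Metric.ball w (|w| / 2), ∀ x, ‖-(φ (v * x) * x)‖ ≤ 2 / |w| := by
    intro v hv x
    have hv' := hball v hv
    have hw' : 0 < |w| := abs_pos.2 hw
    rw [norm_neg, norm_mul, norm_of_nonneg (gaussianPDFReal_nonneg 0 1 _), norm_eq_abs,
      le_div_iff₀ hw']
    have hφ := abs_mul_gaussianPDFReal_zero_one_le (v * x)
    rw [abs_mul] at hφ
    nlinarith [abs_nonneg x, gaussianPDFReal_nonneg 0 1 (v * x)]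
  have key := hasDerivAt_integral_of_dominated_loc_of_deriv_le (μ := ν)
    (F := fun v x => gaussQ (v * x)) (F' := fun v x => -(φ (v * x) * x))
    (Metric.ball_mem_nhds w (by positivity))
    (Eventually.of_forall fun v => (integrable_gaussQ_mul ν v).aestronglyMeasurable)
    (integrable_gaussQ_mul ν w)
    (by fun_prop)
    (Eventually.of_forall fun x v hv => hbound v hv x)
    (integrable_const (2 / |w|))
    (Eventually.of_forall fun x v _ => by
      have h := (hasDerivAt_gaussQ (v * x)).comp v ((hasDerivAt_id v).mul_const x)
      exact h.congr_deriv (by ring))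
  rw [← integral_neg]
  exact key.2

end GaussQMean

lemma miMeas_neg (μ : Measure ℝ) [IsProbabilityMeasure μ] (w : ℝ) :
    miMeas μ (-w) = miMeas μ w := by
  have h := gaussQMean_neg μ w
  rw [gaussQMean, gaussQMean] at h
  rw [miMeas, miMeas, h]
  simp only [neg_mul, binEnt_gaussQ_neg]
  rw [binEnt_eq_binEntropy, binEntropy_one_sub]

lemma miMeas_abs (μ : Measure ℝ) [IsProbabilityMeasure μ] (w : ℝ) :
    miMeas μ |w| = miMeas μ w := by
  rcases abs_choice w with h | h <;> rw [h]
  exact miMeas_neg μ w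

lemma abs_log_one_sub_sub_log_le {a b : ℝ} (ha : 0 < a) (hab : a ≤ b) (hb : b ≤ 1 - a) :
    |log (1 - b) - log b| ≤ log (1 - a) - log a := by
  have hb₀ : 0 < b := ha.trans_le hab
  have hb₁ : 0 < 1 - b := by linarith
  have h₁ := log_le_log ha hab
  have h₂ := log_le_log hb₀ hb
  have h₃ := log_le_log hb₁ (by linarith : 1 - b ≤ 1 - a)
  have h₄ := log_le_log ha (by linarith : a ≤ 1 - b)
  exact abs_le.2 ⟨by linarith, by linarith⟩

instance isProbabilityMeasure_map_abs (μ : Measure ℝ) [IsProbabilityMeasure μ] :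
    IsProbabilityMeasure (μ.map fun x : ℝ => |x|) :=
  Measure.isProbabilityMeasure_map measurable_abs.aemeasurable

lemma integral_map_abs (μ : Measure ℝ) {f : ℝ → ℝ} (hf : Continuous f) :
    ∫ x, f x ∂μ.map (fun x => |x|) = ∫ x, f |x| ∂μ :=
  integral_map measurable_abs.aemeasurable hf.aestronglyMeasurable

noncomputable def foldGain (μ : Measure ℝ) (w : ℝ) : ℝ :=
  binEntropy (gaussQMean (μ.map fun x => |x|) w) - binEntropy (gaussQMean μ w)

lemma miMeas_map_abs_sub (μ : Measure ℝ) (w : ℝ) :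
    miMeas (μ.map fun x => |x|) w - miMeas μ w = foldGain μ w := by
  have h : ∫ x, binEnt (gaussQ (w * x)) ∂μ.map (fun x => |x|) =
      ∫ x, binEnt (gaussQ (w * x)) ∂μ := by
    rw [integral_map_abs μ (by rw [binEnt_eq_binEntropy]; fun_prop)]
    congr 1 with x
    rcases abs_choice x with hx | hx <;> rw [hx]
    rw [mul_neg, binEnt_gaussQ_neg]
  rw [miMeas, miMeas, h, foldGain, gaussQMean, gaussQMean, binEnt_eq_binEntropy]
  ring

section Fold

variable (μ : Measure ℝ) [IsProbabilityMeasure μ]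

lemma foldGain_abs (w : ℝ) : foldGain μ |w| = foldGain μ w := by
  rw [← miMeas_map_abs_sub, ← miMeas_map_abs_sub, miMeas_abs, miMeas_abs]

lemma gaussQMean_map_abs_le {w : ℝ} (hw : 0 ≤ w) :
    gaussQMean (μ.map fun x => |x|) w ≤ gaussQMean μ w := by
  rw [gaussQMean, integral_map_abs μ (by fun_prop)]
  exact integral_mono_of_nonneg (Eventually.of_forall fun x => (gaussQ_pos _).le)
    (integrable_gaussQ_mul μ w) (Eventually.of_forall fun x =>
      gaussQ_antitone (mul_le_mul_of_nonneg_left (le_abs_self x) hw))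

lemma gaussQMean_le_one_sub_map_abs {w : ℝ} (hw : 0 ≤ w) :
    gaussQMean μ w ≤ 1 - gaussQMean (μ.map fun x => |x|) w := by
  rw [← gaussQMean_neg, gaussQMean, gaussQMean, integral_map_abs μ (by fun_prop)]
  exact integral_mono (integrable_gaussQ_mul μ w)
    ((integrable_gaussQ_mul _ (-w)).comp_measurable measurable_abs) fun x =>
      gaussQ_antitone (by nlinarith [neg_abs_le x])

lemma continuous_foldGain : Continuous (foldGain μ) := by
  unfold foldGain
  fun_prop

lemma exists_hasDerivAt_foldGain_nonpos {w : ℝ} (hw : 0 < w) :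
    ∃ d ≤ 0, HasDerivAt (foldGain μ) d w := by
  set a := gaussQMean (μ.map fun x => |x|) w
  set b := gaussQMean μ w
  set I := ∫ x, φ (w * x) * |x| ∂μ
  set B := ∫ x, φ (w * x) * x ∂μ
  have hA : HasDerivAt (gaussQMean (μ.map fun x => |x|)) (-I) w := by
    have h := hasDerivAt_gaussQMean (μ.map fun x => |x|) hw.ne'
    rwa [integral_map_abs μ (by fun_prop), show (∫ x, φ (w * |x|) * |x| ∂μ) = I by
      congr 1 with x
      rcases abs_choice x with hx | hx <;> rw [hx]
      rw [mul_neg w, gaussianPDFReal_zero_one_neg]] at h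
  have hB : HasDerivAt (gaussQMean μ) (-B) w := hasDerivAt_gaussQMean μ hw.ne'
  have hBI : |B| ≤ I := by
    refine (abs_integral_le_integral_abs).trans_eq (congr_arg _ (funext fun x => ?_))
    rw [abs_mul, abs_of_nonneg (gaussianPDFReal_nonneg 0 1 _)]
  have ha₀ := gaussQMean_pos (μ.map fun x => |x|) w
  have ha₁ := gaussQMean_lt_one (μ.map fun x => |x|) w
  have hb₀ := gaussQMean_pos μ w
  have hb₁ := gaussQMean_lt_one μ w
  have hlog := abs_log_one_sub_sub_log_le ha₀ (gaussQMean_map_abs_le μ hw.le)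
    (gaussQMean_le_one_sub_map_abs μ hw.le)
  refine ⟨(log (1 - a) - log a) * -I - (log (1 - b) - log b) * -B, ?_,
    ((hasDerivAt_binEntropy ha₀.ne' ha₁.ne).comp w hA).sub
      ((hasDerivAt_binEntropy hb₀.ne' hb₁.ne).comp w hB)⟩
  have hcross := (le_abs_self _).trans ((abs_mul _ B).trans_le
    (mul_le_mul hlog hBI (abs_nonneg B) ((abs_nonneg _).trans hlog)))
  linarith

lemma antitoneOn_foldGain : AntitoneOn (foldGain μ) (Ici 0) := by
  refine antitoneOn_of_deriv_nonpos (convex_Ici 0) (continuous_foldGain μ).continuousOn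
    ?_ ?_ <;> rw [interior_Ici]
  · intro w hw
    obtain ⟨d, -, hd⟩ := exists_hasDerivAt_foldGain_nonpos μ hw
    exact hd.differentiableAt.differentiableWithinAt
  · intro w hw
    obtain ⟨d, hd₀, hd⟩ := exists_hasDerivAt_foldGain_nonpos μ hw
    rwa [hd.deriv]

end Fold

theorem folded_rate_ge_general (w₁ w₂ : ℝ)
    (hlt : |w₁| < |w₂|) (μ : Measure ℝ) [IsProbabilityMeasure μ] :
    wynerRs w₁ w₂ μ ≤ wynerRs w₁ w₂ (μ.map (fun x : ℝ => |x|)) := by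
  have h := antitoneOn_foldGain μ (abs_nonneg w₁) (abs_nonneg w₂) hlt.le
  rw [foldGain_abs, foldGain_abs, ← miMeas_map_abs_sub, ← miMeas_map_abs_sub] at h
  unfold wynerRs
  linarith

/-- Lemma 2, first inequality: if `|w₁| < |w₂|`, folding the input distribution
(replacing `μ` by the law of `|X|`) does not decrease the Wyner secrecy rate. -/
theorem folded_rate_ge (w₁ w₂ : ℝ) (hw₁ : w₁ ≠ 0) (hw₂ : w₂ ≠ 0)
    (hlt : |w₁| < |w₂|) (μ : Measure ℝ) [IsProbabilityMeasure μ]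
    (hint : Integrable (fun x : ℝ => x ^ 2) μ) :
    wynerRs w₁ w₂ μ ≤ wynerRs w₁ w₂ (μ.map (fun x : ℝ => |x|)) :=
  folded_rate_ge_general w₁ w₂ hlt μ
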